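/- arXiv:2103.06970 — 8 statements merged into one kernel-verified Lean document; each statement's English description precedes it below -/
import Mathlib

section
/- Let η ∈ (0,1), d ∈ [0,1). Define P_report(0|k) = (1-d)³[(1-η/2)^k - (1-d)(1-η)^k] + d(1-d)³(1-η)^k and P_report(1|k) = 2(1-d)³[(1-3η/4)^k - (1-d)(1-η)^k]. Then P_guess(k) = P_report(0|k) / (P_report(0|k) + P_report(1|k)) satisfies P_guess(k) = 1/2 for k ∈ {0,1}, P_guess(k) > 1/2 for k ≥ 2, and P_guess(k) → 1 as k → ∞. -/
/-- Four-detector setup with equal efficiencies η and dark counts d: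
with P_report(0|k) and P_report(1|k) as given, the conditional guessing
probability P_guess(k) = P_report(0|k)/(P_report(0|k)+P_report(1|k)) equals
1/2 for k ∈ {0,1}, is > 1/2 for k ≥ 2, and tends to 1 as k → ∞. -/
theorem stmt_8 (η d : ℝ) (hη : η ∈ Set.Ioo (0:ℝ) 1) (hd : d ∈ Set.Ioo (0:ℝ) 1)
    (P0 P1 Pg : ℕ → ℝ)
    (hP0 : ∀ k, P0 k = (1-d)^3 * ((1-η/2)^k - (1-d)*(1-η)^k)
        + d*(1-d)^3*(1-η)^k)
    (hP1 : ∀ k, P1 k = 2*(1-d)^3 * ((1-3*η/4)^k - (1-d)*(1-η)^k))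
    (hPg : ∀ k, Pg k = P0 k / (P0 k + P1 k)) :
    Pg 0 = 1/2 ∧ Pg 1 = 1/2 ∧ (∀ k, 2 ≤ k → 1/2 < Pg k) ∧
      Filter.Tendsto Pg Filter.atTop (nhds 1) := by
  obtain ⟨hη0, hη1⟩ := hη
  obtain ⟨hd0, hd1⟩ := hd
  have hc : (0:ℝ) < (1-d)^3 := pow_pos (by linarith) 3
  have hA : (0:ℝ) < 1 - η/2 := by linarith
  have hB : (0:ℝ) < 1 - η := by linarith
  have hM : (0:ℝ) < 1 - 3*η/4 := by linarith
  have hBA : (1-η:ℝ) ≤ 1 - η/2 := by linarith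
  have hBM : (1-η:ℝ) ≤ 1 - 3*η/4 := by linarith
  have hP0pos : ∀ k, 0 < P0 k := by
    intro k
    have h1 : (1-η)^k ≤ (1-η/2)^k := pow_le_pow_left₀ hB.le hBA k
    have h2 : 0 < (1-η)^k := pow_pos hB k
    rw [hP0]
    nlinarith [mul_pos hd0 h2, mul_pos hc (mul_pos hd0 h2)]
  have hP1pos : ∀ k, 0 < P1 k := by
    intro k
    have h1 : (1-η)^k ≤ (1-3*η/4)^k := pow_le_pow_left₀ hB.le hBM k
    have h2 : 0 < (1-η)^k := pow_pos hB k
    rw [hP1]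
    nlinarith [mul_pos hc (mul_pos hd0 h2)]
  have key : ∀ k, P0 k = P1 k → Pg k = 1/2 := by
    intro k hk
    rw [hPg, hk, div_eq_iff (by nlinarith [hP1pos k] : P1 k + P1 k ≠ 0)]
    ring
  refine ⟨key 0 ?_, key 1 ?_, ?_, ?_⟩
  · rw [hP0, hP1]; simp only [pow_zero]; ring
  · rw [hP0, hP1]; simp only [pow_one]; ring
  · intro k hk
    have hSC := strictConvexOn_pow hk
    have hstep := hSC.2 (Set.mem_Ici.2 hA.le) (Set.mem_Ici.2 hB.le)
      (by intro h; simp at h; linarith : (1-η/2:ℝ) ≠ 1-η)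
      (by norm_num : (0:ℝ) < 1/2) (by norm_num : (0:ℝ) < 1/2) (by norm_num)
    simp only [smul_eq_mul] at hstep
    have heq : (1/2:ℝ)*(1-η/2) + (1/2)*(1-η) = 1-3*η/4 := by ring
    rw [heq] at hstep
    have hX : (0:ℝ) < (1-η/2)^k + (1-η)^k - 2*(1-3*η/4)^k := by linarith
    have hdiff : P0 k - P1 k = (1-d)^3 * ((1-η/2)^k + (1-η)^k - 2*(1-3*η/4)^k) := by
      rw [hP0, hP1]; ring
    have hS : 0 < P0 k + P1 k := add_pos (hP0pos k) (hP1pos k)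
    rw [hPg, lt_div_iff₀ hS]
    nlinarith [mul_pos hc hX]
  · have hAk : ∀ k : ℕ, ((1-η/2):ℝ)^k ≠ 0 := fun k => (pow_pos hA k).ne'
    have hr0 : (0:ℝ) ≤ (1-η)/(1-η/2) := div_nonneg hB.le hA.le
    have hr1 : (1-η)/(1-η/2) < 1 := (div_lt_one hA).2 (by linarith)
    have hs0 : (0:ℝ) ≤ (1-3*η/4)/(1-η/2) := div_nonneg hM.le hA.le
    have hs1 : (1-3*η/4)/(1-η/2) < 1 := (div_lt_one hA).2 (by linarith)
    have hrt : Filter.Tendsto (fun k : ℕ => ((1-η)/(1-η/2))^k) Filter.atTop (nhds 0) :=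
      tendsto_pow_atTop_nhds_zero_of_lt_one hr0 hr1
    have hst : Filter.Tendsto (fun k : ℕ => ((1-3*η/4)/(1-η/2))^k) Filter.atTop (nhds 0) :=
      tendsto_pow_atTop_nhds_zero_of_lt_one hs0 hs1
    have hNlim : Filter.Tendsto
        (fun k : ℕ => (1-d)^3 + (1-d)^3*(2*d-1)*((1-η)/(1-η/2))^k)
        Filter.atTop (nhds ((1-d)^3)) := by
      have := (hrt.const_mul ((1-d)^3*(2*d-1))).const_add ((1-d)^3)
      simpa using this
    have hDlim : Filter.Tendsto
        (fun k : ℕ => (1-d)^3 + (1-d)^3*(2*d-1)*((1-η)/(1-η/2))^k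
          + 2*(1-d)^3*((1-3*η/4)/(1-η/2))^k - 2*(1-d)^3*(1-d)*((1-η)/(1-η/2))^k)
        Filter.atTop (nhds ((1-d)^3)) := by
      have h2 := hst.const_mul (2*(1-d)^3)
      have h3 := hrt.const_mul (2*(1-d)^3*(1-d))
      have := (hNlim.add h2).sub h3
      simpa using this
    have hquot := hNlim.div hDlim hc.ne'
    rw [div_self hc.ne'] at hquot
    refine hquot.congr (fun k => ?_)
    have hcr : ((1-η)/(1-η/2))^k * (1-η/2)^k = (1-η)^k := by
      rw [div_pow, div_mul_cancel₀ _ (hAk k)]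
    have hcs : ((1-3*η/4)/(1-η/2))^k * (1-η/2)^k = (1-3*η/4)^k := by
      rw [div_pow, div_mul_cancel₀ _ (hAk k)]
    have hN : P0 k = ((1-d)^3 + (1-d)^3*(2*d-1)*((1-η)/(1-η/2))^k) * (1-η/2)^k := by
      rw [hP0]
      linear_combination (-(1-d)^3*(2*d-1)) * hcr
    have hD : P0 k + P1 k = ((1-d)^3 + (1-d)^3*(2*d-1)*((1-η)/(1-η/2))^k
        + 2*(1-d)^3*((1-3*η/4)/(1-η/2))^k - 2*(1-d)^3*(1-d)*((1-η)/(1-η/2))^k)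
        * (1-η/2)^k := by
      rw [hP0, hP1]
      linear_combination (-(1-d)^3*(2*d-1) + 2*(1-d)^3*(1-d)) * hcr + (-2*(1-d)^3) * hcs
    rw [hPg, hD, hN, Pi.div_apply, mul_div_mul_right _ _ (hAk k)]
end

section
/- Let a ∈ (0,1], η0, η+ ∈ (0,1) with η0 ≠ η+, and k a nonnegative integer. Define P0(k) = a(1-η+/2)^k - a²(1-(η0+η+)/2)^k and P1(k) = a(1-η0/2)^k - a²(1-(η0+η+)/2)^k. Then P_guess(k) = max{P0(k),P1(k)} / (P0(k)+P1(k)) satisfies P_guess(0) = 1/2, P_guess(k) > 1/2 for k ≥ 1, and P_guess(k) → 1 as k → ∞. -/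
/-!
With `x = 1 - η₊/2`, `y = 1 - η₀/2`, `z = 1 - (η₀ + η₊)/2`, both probabilities have the shape
`a u^k - a² z^k` with `0 ≤ z ≤ u`, which is at least `a (1 - a) u^k > 0`, and they differ for
`k ≥ 1` because `x ≠ y`. For distinct positive `p, q` the ratio `max p q / (p + q)` exceeds `1/2`,
and it tends to `1` as soon as `min p q / max p q` tends to `0`; here that ratio is at most
`(min x y / max x y)^k / (1 - a)`.
-/

open Filter Topology

noncomputable section

def guessProb (p q : ℝ) : ℝ := max p q / (p + q)

namespace guessProb

theorem comm (p q : ℝ) : guessProb p q = guessProb q p := by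
  rw [guessProb, guessProb, max_comm, add_comm]

theorem self {p : ℝ} (hp : p ≠ 0) : guessProb p p = 1 / 2 := by
  rw [guessProb, max_self, ← two_mul, div_mul_cancel_right₀ hp, one_div]

theorem half_lt {p q : ℝ} (hp : 0 < p) (hq : 0 < q) (hpq : p ≠ q) : 1 / 2 < guessProb p q := by
  rw [guessProb, lt_div_iff₀ (add_pos hp hq)]
  rcases hpq.lt_or_gt with h | h
  · rw [max_eq_right h.le]; linarith
  · rw [max_eq_left h.le]; linarith

theorem eq_inv_one_add_div {p q : ℝ} (hqp : q ≤ p) (hp : p ≠ 0) :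
    guessProb p q = (1 + q / p)⁻¹ := by
  rw [guessProb, max_eq_left hqp, one_add_div hp, inv_div]

theorem tendsto_one {ι : Type*} {l : Filter ι} {p q : ι → ℝ} (hqp : ∀ i, q i ≤ p i)
    (hp : ∀ i, p i ≠ 0) (hratio : Tendsto (fun i => q i / p i) l (𝓝 0)) :
    Tendsto (fun i => guessProb (p i) (q i)) l (𝓝 1) := by
  simp_rw [eq_inv_one_add_div (hqp _) (hp _)]
  simpa using ((tendsto_const_nhds (x := (1 : ℝ))).add hratio).inv₀ (by norm_num)

end guessProb

def clickProb (a u z : ℝ) (k : ℕ) : ℝ := a * u ^ k - a ^ 2 * z ^ k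

section clickProb

variable {a u v z : ℝ}

theorem clickProb_zero : clickProb a u z 0 = a - a ^ 2 := by
  simp [clickProb]

theorem mul_one_sub_mul_pow_le_clickProb (hz : 0 ≤ z) (hzu : z ≤ u) (k : ℕ) :
    a * (1 - a) * u ^ k ≤ clickProb a u z k := by
  have : a ^ 2 * z ^ k ≤ a ^ 2 * u ^ k := by gcongr
  rw [clickProb]; linarith

theorem clickProb_le_mul_pow (hz : 0 ≤ z) (k : ℕ) : clickProb a u z k ≤ a * u ^ k := by
  unfold clickProb; nlinarith [pow_nonneg hz k, sq_nonneg a]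

theorem clickProb_pos (ha : a ∈ Set.Ioo 0 1) (hz : 0 ≤ z) (hzu : z ≤ u) (hu : 0 < u) (k : ℕ) :
    0 < clickProb a u z k :=
  (mul_pos (mul_pos ha.1 (sub_pos.2 ha.2)) (pow_pos hu k)).trans_le
    (mul_one_sub_mul_pow_le_clickProb hz hzu k)

theorem clickProb_le_clickProb (ha : 0 ≤ a) (hv : 0 ≤ v) (hvu : v ≤ u) (k : ℕ) :
    clickProb a v z k ≤ clickProb a u z k := by
  unfold clickProb; gcongr

theorem clickProb_ne_clickProb (ha : a ≠ 0) (hu : 0 ≤ u) (hv : 0 ≤ v) (huv : u ≠ v) {k : ℕ}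
    (hk : k ≠ 0) : clickProb a u z k ≠ clickProb a v z k := by
  intro h
  have : u ^ k = v ^ k := mul_left_cancel₀ ha (by unfold clickProb at h; linarith)
  exact huv ((pow_left_inj₀ hu hv hk).1 this)

theorem tendsto_clickProb_div_clickProb (ha : a ∈ Set.Ioo 0 1) (hz : 0 ≤ z) (hzv : z ≤ v)
    (hvu : v < u) : Tendsto (fun k => clickProb a v z k / clickProb a u z k) atTop (𝓝 0) := by
  have hu : 0 < u := hz.trans_lt (hzv.trans_lt hvu)
  have hc : 0 < a * (1 - a) := mul_pos ha.1 (sub_pos.2 ha.2)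
  have hgeom : Tendsto (fun k : ℕ => a * (v / u) ^ k / (a * (1 - a))) atTop (𝓝 0) := by
    simpa using ((tendsto_pow_atTop_nhds_zero_of_lt_one (div_nonneg (hz.trans hzv) hu.le)
      ((div_lt_one hu).2 hvu)).const_mul a).div_const (a * (1 - a))
  have hnum : ∀ k, 0 ≤ clickProb a v z k := fun k =>
    (mul_nonneg hc.le (pow_nonneg (hz.trans hzv) k)).trans
      (mul_one_sub_mul_pow_le_clickProb hz hzv k)
  have hden : ∀ k, 0 < clickProb a u z k := clickProb_pos ha hz (hzv.trans hvu.le) hu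
  refine squeeze_zero (fun k => div_nonneg (hnum k) (hden k).le) (fun k => ?_) hgeom
  calc clickProb a v z k / clickProb a u z k
      ≤ a * v ^ k / (a * (1 - a) * u ^ k) :=
        div_le_div₀ (mul_nonneg ha.1.le (pow_nonneg (hz.trans hzv) k))
          (clickProb_le_mul_pow hz k) (mul_pos hc (pow_pos hu k))
          (mul_one_sub_mul_pow_le_clickProb hz (hzv.trans hvu.le) k)
    _ = a * (v / u) ^ k / (a * (1 - a)) := by
        rw [div_pow]; field_simp

theorem tendsto_guessProb_clickProb (ha : a ∈ Set.Ioo 0 1) (hz : 0 ≤ z) (hzv : z ≤ v)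
    (hvu : v < u) :
    Tendsto (fun k => guessProb (clickProb a u z k) (clickProb a v z k)) atTop (𝓝 1) :=
  guessProb.tendsto_one (fun k => clickProb_le_clickProb ha.1.le (hz.trans hzv) hvu.le k)
    (fun k => (clickProb_pos ha hz (hzv.trans hvu.le) (hz.trans_lt (hzv.trans_lt hvu)) k).ne')
    (tendsto_clickProb_div_clickProb ha hz hzv hvu)

end clickProb

end

/-- Four-detector setup with (1-d0)(1-d1) = (1-d+)(1-d-) = a, η0 = η1 ≠ η+ = η-:
with P0(k), P1(k) as given, P_guess(k) = max{P0,P1}/(P0+P1) equals 1/2 for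
k = 0, is > 1/2 for k ≥ 1, and tends to 1 as k → ∞. -/
theorem stmt_9 (a η0 ηp : ℝ) (ha : a ∈ Set.Ioo (0:ℝ) 1)
    (hη0 : η0 ∈ Set.Ioo (0:ℝ) 1) (hηp : ηp ∈ Set.Ioo (0:ℝ) 1)
    (hne : η0 ≠ ηp)
    (P0 P1 Pg : ℕ → ℝ)
    (hP0 : ∀ k, P0 k = a*(1-ηp/2)^k - a^2*(1-(η0+ηp)/2)^k)
    (hP1 : ∀ k, P1 k = a*(1-η0/2)^k - a^2*(1-(η0+ηp)/2)^k)
    (hPg : ∀ k, Pg k = max (P0 k) (P1 k) / (P0 k + P1 k)) :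
    Pg 0 = 1/2 ∧ (∀ k, 1 ≤ k → 1/2 < Pg k) ∧
      Filter.Tendsto Pg Filter.atTop (nhds 1) := by
  have hz : 0 ≤ 1 - (η0 + ηp) / 2 := by linarith [hη0.2, hηp.2]
  have hzx : 1 - (η0 + ηp) / 2 ≤ 1 - ηp / 2 := by linarith [hη0.1]
  have hzy : 1 - (η0 + ηp) / 2 ≤ 1 - η0 / 2 := by linarith [hηp.1]
  have hx : 0 < 1 - ηp / 2 := by linarith [hηp.2]
  have hy : 0 < 1 - η0 / 2 := by linarith [hη0.2]
  have hxy : 1 - ηp / 2 ≠ 1 - η0 / 2 := fun h => hne (by linarith)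
  set x := 1 - ηp / 2
  set y := 1 - η0 / 2
  set z := 1 - (η0 + ηp) / 2
  obtain rfl : Pg = fun k => guessProb (clickProb a x z k) (clickProb a y z k) := by
    ext k; rw [hPg, hP0, hP1]; rfl
  refine ⟨?_, fun k hk => ?_, ?_⟩
  · simpa only [clickProb_zero] using guessProb.self (p := a - a ^ 2) (by nlinarith [ha.1, ha.2])
  · exact guessProb.half_lt (clickProb_pos ha hz hzx hx k) (clickProb_pos ha hz hzy hy k)
      (clickProb_ne_clickProb ha.1.ne' hx.le hy.le hxy (by omega))
  · rcases hxy.lt_or_gt with hlt | hgt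
    · simpa only [guessProb.comm (clickProb a x z _)]
        using tendsto_guessProb_clickProb ha hz hzx hlt
    · exact tendsto_guessProb_clickProb ha hz hzy hgt
end

section
/- Let 0 < η_low ≤ η_up < 1, 0 ≤ δ < 1/2, and suppose a probability P(k) satisfies (1-2δ)(1-η_up)^k ≤ P(k) ≤ (1-η_low)^k for all k ∈ ℕ. Then for any two such probabilities P, P' we have |P(k) - P'(k)| ≤ max{2δ, f(k*)} where f(k) = (1-η_low)^k - (1-2δ)(1-η_up)^k and k* is its real maximizer (if η_low = η_up, the bound 2δ suffices). -/
/-- If two probabilities P, P' both satisfy the sandwich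
(1-2δ)(1-η_up)^k ≤ · ≤ (1-η_low)^k for all k, then
|P(k) - P'(k)| ≤ max{2δ, f(k*)} where f(x) = (1-η_low)^x - (1-2δ)(1-η_up)^x
and k* is its critical point. -/
theorem stmt_13 (ηl ηu δ : ℝ)
    (hl : 0 < ηl) (hlu : ηl ≤ ηu) (hu : ηu < 1)
    (hδ0 : 0 ≤ δ) (hδ : δ < 1/2)
    (P P' : ℕ → ℝ)
    (hP : ∀ k : ℕ, (1-2*δ)*(1-ηu)^k ≤ P k ∧ P k ≤ (1-ηl)^k)
    (hP' : ∀ k : ℕ, (1-2*δ)*(1-ηu)^k ≤ P' k ∧ P' k ≤ (1-ηl)^k)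
    (f : ℝ → ℝ)
    (hf : ∀ x : ℝ, f x = (1-ηl) ^ x - (1-2*δ) * (1-ηu) ^ x)
    (kstar : ℝ)
    (hk : kstar = Real.log ((1-2*δ) * Real.log (1-ηu) / Real.log (1-ηl)) /
        (Real.log (1-ηl) - Real.log (1-ηu))) :
    ∀ k : ℕ, |P k - P' k| ≤ max (2*δ) (f kstar) := by
  intro k
  have ha0 : (0:ℝ) < 1 - ηu := by linarith
  have hb0 : (0:ℝ) < 1 - ηl := by linarith
  have hb1 : (1:ℝ) - ηl < 1 := by linarith
  have hc0 : (0:ℝ) < 1 - 2*δ := by linarith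
  have hbound : |P k - P' k| ≤ (1-ηl)^k - (1-2*δ)*(1-ηu)^k := by
    obtain ⟨h1, h2⟩ := hP k
    obtain ⟨h3, h4⟩ := hP' k
    rw [abs_le]
    constructor <;> linarith
  rcases eq_or_lt_of_le hlu with heq | hlt
  · -- ηl = ηu : bound by 2δ
    subst heq
    have hpow1 : (1-ηl)^k ≤ 1 := pow_le_one₀ hb0.le hb1.le
    have hpow0 : (0:ℝ) ≤ (1-ηl)^k := pow_nonneg hb0.le k
    refine le_trans hbound (le_trans ?_ (le_max_left _ _))
    nlinarith
  · -- ηl < ηu : bound by f kstar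
    refine le_trans hbound (le_trans ?_ (le_max_right _ _))
    set L := Real.log (1-ηl) with hL
    set M := Real.log (1-ηu) with hM
    have hL0 : L < 0 := Real.log_neg hb0 hb1
    have hML : M < L := Real.log_lt_log (by linarith) (by linarith)
    have hM0 : M < 0 := lt_trans hML hL0
    set t := L / M with ht
    have hMne : M ≠ 0 := ne_of_lt hM0
    have hLne : L ≠ 0 := ne_of_lt hL0
    have ht0 : 0 < t := div_pos_of_neg_of_neg hL0 hM0
    have htM : t * M = L := div_mul_cancel₀ L hMne
    have ht1 : t < 1 := by nlinarith
    -- exp((L-M)*kstar) = (1-2δ)*M/L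
    have hEpos : 0 < (1-2*δ) * M / L := by
      apply div_pos_of_neg_of_neg _ hL0
      nlinarith
    have hE : Real.exp ((L - M) * kstar) = (1-2*δ) * M / L := by
      rw [hk]
      have hLM : L - M ≠ 0 := (sub_pos.mpr hML).ne'
      rw [mul_comm, div_mul_cancel₀ _ hLM, Real.exp_log hEpos]
    -- c * exp(M*kstar) = t * exp(L*kstar)
    have hck : (1-2*δ) * Real.exp (M*kstar) = t * Real.exp (L*kstar) := by
      have h1 : Real.exp (L*kstar) = Real.exp ((L-M)*kstar) * Real.exp (M*kstar) := by
        rw [← Real.exp_add]; ring_nf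
      rw [h1, hE, ht]
      field_simp
    -- key: f x ≤ f kstar for all x
    have key : ∀ x : ℝ, f x ≤ f kstar := by
      intro x
      rw [hf x, hf kstar]
      rw [Real.rpow_def_of_pos hb0, Real.rpow_def_of_pos ha0,
        Real.rpow_def_of_pos hb0, Real.rpow_def_of_pos ha0, ← hL, ← hM]
      have hconv := convexOn_exp.2 (Set.mem_univ (M*(x-kstar))) (Set.mem_univ (0:ℝ))
        ht0.le (by linarith : (0:ℝ) ≤ 1 - t) (by ring)
      simp only [smul_eq_mul, mul_zero, add_zero, Real.exp_zero, mul_one] at hconv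
      have hLe : L * x = L * kstar + t * (M * (x - kstar)) := by
        rw [← mul_assoc, htM]; ring
      have hMe : M * x = M * kstar + M * (x - kstar) := by ring
      rw [hLe, hMe, Real.exp_add, Real.exp_add]
      have hp1 : 0 < Real.exp (L*kstar) := Real.exp_pos _
      have hp2 : 0 < Real.exp (M*(x-kstar)) := Real.exp_pos _
      have hck2 : (1-2*δ) * (Real.exp (M*kstar) * Real.exp (M*(x-kstar)))
          = t * Real.exp (L*kstar) * Real.exp (M*(x-kstar)) := by
        rw [← mul_assoc, hck]
      rw [hck2]
      have h2 := mul_le_mul_of_nonneg_left hconv hp1.le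
      nlinarith [h2]
    have hnat : (1-ηl)^k - (1-2*δ)*(1-ηu)^k = f (k:ℝ) := by
      rw [hf, Real.rpow_natCast, Real.rpow_natCast]
    rw [hnat]
    exact key _
end

section
/- Let P(·|0) and P(·|1) be product-form probability distributions on {0,1}^N given by P(m|β) = Π_{i=1}^N P_i(m_i | m_1...m_{i-1}, β), where each conditional satisfies |P_i(1 | h, 1) - P_i(1 | h, 0)| ≤ B_i for every history h ∈ {0,1}^{i-1}. Then the L1 distance satisfies Σ_{m ∈ {0,1}^N} |P(m|0) - P(m|1)| ≤ 2 Σ_{i=1}^N B_i. -/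
/-!
Peel off the last coordinate. Writing `Q_β` for the law of the first `n` bits and `p_β` for the
conditional probability that bit `n + 1` is `1`, the two new terms satisfy
`|Q₀ p₀ - Q₁ p₁| + |Q₀ (1 - p₀) - Q₁ (1 - p₁)| ≤ |Q₀ - Q₁| + 2 Q₁ |p₀ - p₁|`,
and summing over the first `n` bits, using `∑ Q₁ = 1`, adds at most `2 B n` to the `L¹` distance.
-/

open Finset

def coinWeight (q : ℝ) (b : Bool) : ℝ := if b then q else 1 - q

noncomputable def chainProb (p : List Bool → ℝ) (n : ℕ) (m : Fin n → Bool) : ℝ :=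
  ∏ i : Fin n, coinWeight (p ((List.ofFn m).take i)) (m i)

lemma coinWeight_nonneg {q : ℝ} (hq : q ∈ Set.Icc 0 1) (b : Bool) : 0 ≤ coinWeight q b := by
  cases b
  · simpa [coinWeight] using hq.2
  · exact hq.1

lemma abs_coinWeight_sub (p₀ p₁ : ℝ) (b : Bool) :
    |coinWeight p₀ b - coinWeight p₁ b| = |p₀ - p₁| := by
  cases b <;> simp [coinWeight, abs_sub_comm]

lemma sum_coinWeight (q : ℝ) : ∑ b, coinWeight q b = 1 := by
  simp [coinWeight]

lemma sum_abs_mul_coinWeight_sub_le {Q₀ Q₁ p₀ p₁ : ℝ} (hQ₁ : 0 ≤ Q₁)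
    (hp₀ : p₀ ∈ Set.Icc 0 1) :
    ∑ b, |Q₀ * coinWeight p₀ b - Q₁ * coinWeight p₁ b| ≤ |Q₀ - Q₁| + 2 * Q₁ * |p₀ - p₁| := by
  have split (b : Bool) :
      |Q₀ * coinWeight p₀ b - Q₁ * coinWeight p₁ b|
        ≤ |Q₀ - Q₁| * coinWeight p₀ b + Q₁ * |p₀ - p₁| := by
    calc |Q₀ * coinWeight p₀ b - Q₁ * coinWeight p₁ b|
        = |(Q₀ - Q₁) * coinWeight p₀ b + Q₁ * (coinWeight p₀ b - coinWeight p₁ b)| := by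
          ring_nf
      _ ≤ |Q₀ - Q₁| * coinWeight p₀ b + Q₁ * |coinWeight p₀ b - coinWeight p₁ b| := by
          grw [abs_add_le, abs_mul, abs_mul, abs_of_nonneg (coinWeight_nonneg hp₀ b),
            abs_of_nonneg hQ₁]
      _ = |Q₀ - Q₁| * coinWeight p₀ b + Q₁ * |p₀ - p₁| := by rw [abs_coinWeight_sub]
  calc ∑ b, |Q₀ * coinWeight p₀ b - Q₁ * coinWeight p₁ b|
      ≤ ∑ b, (|Q₀ - Q₁| * coinWeight p₀ b + Q₁ * |p₀ - p₁|) := sum_le_sum fun b _ => split b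
    _ = |Q₀ - Q₁| + 2 * Q₁ * |p₀ - p₁| := by
      rw [sum_add_distrib, ← mul_sum, sum_coinWeight, Fintype.sum_bool]; ring

lemma List.ofFn_snoc {α : Type*} {n : ℕ} (m : Fin n → α) (b : α) :
    List.ofFn (Fin.snoc m b : Fin (n + 1) → α) = List.ofFn m ++ [b] := by
  rw [List.ofFn_succ_last]
  simp

lemma Fintype.sum_fin_succ_pi {M : Type*} [AddCommMonoid M] {α : Type*} [Fintype α] {n : ℕ}
    (F : (Fin (n + 1) → α) → M) :
    ∑ m, F m = ∑ m : Fin n → α, ∑ b, F (Fin.snoc m b) := by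
  rw [← Fintype.sum_equiv (Fin.snocEquiv fun _ => α) (fun p => F (Fin.snoc p.2 p.1)) F
    fun _ => rfl, Fintype.sum_prod_type, sum_comm]

section chainProb

variable {p : List Bool → ℝ}

lemma chainProb_snoc (n : ℕ) (m : Fin n → Bool) (b : Bool) :
    chainProb p (n + 1) (Fin.snoc m b) = chainProb p n m * coinWeight (p (List.ofFn m)) b := by
  rw [chainProb, Fin.prod_univ_castSucc, List.ofFn_snoc]
  congr 1
  · refine prod_congr rfl fun i _ => ?_
    rw [Fin.snoc_castSucc, Fin.val_castSucc,
      List.take_append_of_le_length (by simp [i.isLt.le])]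
  · rw [Fin.snoc_last, Fin.val_last, List.take_left' List.length_ofFn]

lemma chainProb_nonneg (hp : ∀ h, p h ∈ Set.Icc 0 1) (n : ℕ) (m : Fin n → Bool) :
    0 ≤ chainProb p n m :=
  prod_nonneg fun _ _ => coinWeight_nonneg (hp _) _

lemma sum_chainProb (n : ℕ) : ∑ m, chainProb p n m = 1 := by
  induction n with
  | zero => simp [chainProb]
  | succ n ih =>
    simp only [Fintype.sum_fin_succ_pi, chainProb_snoc, ← mul_sum, sum_coinWeight, mul_one, ih]

theorem sum_abs_chainProb_sub_le {q : List Bool → ℝ} (hp : ∀ h, p h ∈ Set.Icc 0 1)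
    (hq : ∀ h, q h ∈ Set.Icc 0 1) (B : ℕ → ℝ) (n : ℕ)
    (hB : ∀ h : List Bool, h.length < n → |p h - q h| ≤ B h.length) :
    ∑ m, |chainProb p n m - chainProb q n m| ≤ 2 * ∑ i ∈ range n, B i := by
  induction n with
  | zero => simp [chainProb]
  | succ n ih =>
    have step (m : Fin n → Bool) :
        ∑ b, |chainProb p (n + 1) (Fin.snoc m b) - chainProb q (n + 1) (Fin.snoc m b)|
          ≤ |chainProb p n m - chainProb q n m| + 2 * chainProb q n m * B n := by
      simp only [chainProb_snoc]
      grw [sum_abs_mul_coinWeight_sub_le (chainProb_nonneg hq n m) (hp _),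
        hB (List.ofFn m) (by simp), List.length_ofFn]
      exact mul_nonneg zero_le_two (chainProb_nonneg hq n m)
    calc ∑ m, |chainProb p (n + 1) m - chainProb q (n + 1) m|
        ≤ ∑ m, (|chainProb p n m - chainProb q n m| + 2 * chainProb q n m * B n) := by
          rw [Fintype.sum_fin_succ_pi]; exact sum_le_sum fun m _ => step m
      _ = ∑ m, |chainProb p n m - chainProb q n m| + 2 * B n := by
          rw [sum_add_distrib, ← sum_mul, ← mul_sum, sum_chainProb, mul_one]
      _ ≤ 2 * ∑ i ∈ range (n + 1), B i := by
          rw [sum_range_succ]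
          linarith [ih fun h hh => hB h (by omega)]

end chainProb

/-- For product-form distributions P(m|β) = ∏ᵢ Pᵢ(mᵢ|history,β) on {0,1}^N with
|Pᵢ(1|h,1) - Pᵢ(1|h,0)| ≤ B(h.length) for all relevant histories h, the L1
distance satisfies ∑ₘ |P(m|0)-P(m|1)| ≤ 2 ∑_{i<N} B(i). -/
theorem stmt_14 (N : ℕ) (Pcond : List Bool → Bool → ℝ)
    (hrange : ∀ h β, 0 ≤ Pcond h β ∧ Pcond h β ≤ 1)
    (B : ℕ → ℝ)
    (hB : ∀ h : List Bool, h.length < N →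
      |Pcond h true - Pcond h false| ≤ B h.length)
    (Pm : (Fin N → Bool) → Bool → ℝ)
    (hPm : ∀ m β, Pm m β = ∏ i : Fin N,
      (if m i then Pcond ((List.ofFn m).take i.val) β
       else 1 - Pcond ((List.ofFn m).take i.val) β)) :
    ∑ m : Fin N → Bool, |Pm m false - Pm m true|
      ≤ 2 * ∑ i ∈ Finset.range N, B i := by
  have hPm_chain (m : Fin N → Bool) (β : Bool) : Pm m β = chainProb (Pcond · β) N m := hPm m β
  simp only [hPm_chain]
  exact sum_abs_chainProb_sub_le (fun h => hrange h false) (fun h => hrange h true) B N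
    fun h hh => abs_sub_comm (Pcond h true) _ ▸ hB h hh
end

section
/- Let η0 ≠ η1 with η0, η1 ∈ (0,1), and let S_{c0 c1 β} ∈ [0,1] for c0,c1,β ∈ {0,1} with S_{001} = S_{000}. Suppose the eight linear equations obtained by requiring P_report(1|1,ρ,k) = P_report(1|0,ρ,k) hold for k=0; for k=1 with ρ ∈ {|0⟩⟨0|, |1⟩⟨1|, |+⟩⟨+|, |−⟩⟨−|}; and for k=2 with ρ ∈ {|00⟩⟨00|, |11⟩⟨11|, |++⟩⟨++|}, with detection probabilities given by the binomial routing model with efficiencies η0, η1 and zero dark counts, and bases computational/Hadamard. Then all S_{c0 c1 β} are equal: S_{c0 c1 β} = S_{000} for all c0, c1, β. -/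
set_option maxHeartbeats 2000000 in
/-- Theorem 1 of the paper (BB84 case): with zero dark counts, efficiencies
η0 ≠ η1 in (0,1), computational/Hadamard bases, if the eight equations
P_report(1|β=1,ρ,k) = P_report(1|β=0,ρ,k) hold (k=0; k=1 with |0⟩,|1⟩,|+⟩,|−⟩;
k=2 with |00⟩,|11⟩,|++⟩), then all the reporting probabilities S_{c0c1β}
are equal, i.e. the strategy is trivial. -/
theorem stmt_16 (η0 η1 : ℝ)
    (hη0 : η0 ∈ Set.Ioo (0:ℝ) 1) (hη1 : η1 ∈ Set.Ioo (0:ℝ) 1)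
    (hne : η0 ≠ η1)
    (S : Bool → Bool → Bool → ℝ)
    (hS : ∀ c0 c1 β, S c0 c1 β ∈ Set.Icc (0:ℝ) 1)
    (hS001 : S false false true = S false false false)
    (Prep : Bool → ℝ → ℕ → ℝ)
    (hPrep : ∀ β q k, Prep β q k =
        S false false β * (q*(1-η0) + (1-q)*(1-η1))^k
      + S false true β * ((1 - q*η0)^k - (q*(1-η0) + (1-q)*(1-η1))^k)
      + S true false β * ((1 - (1-q)*η1)^k - (q*(1-η0) + (1-q)*(1-η1))^k)
      + S true true β * (1 + (q*(1-η0) + (1-q)*(1-η1))^k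
          - (1 - q*η0)^k - (1 - (1-q)*η1)^k))
    (h0 : Prep true (1/2) 0 = Prep false 1 0)
    (h1 : Prep true (1/2) 1 = Prep false 1 1)
    (h2 : Prep true (1/2) 1 = Prep false 0 1)
    (h3 : Prep true 1 1 = Prep false (1/2) 1)
    (h4 : Prep true 0 1 = Prep false (1/2) 1)
    (h5 : Prep true (1/2) 2 = Prep false 1 2)
    (h6 : Prep true (1/2) 2 = Prep false 0 2)
    (h7 : Prep true 1 2 = Prep false (1/2) 2) :
    ∀ c0 c1 β, S c0 c1 β = S false false false := by
  obtain ⟨hη0p, hη0l⟩ := hη0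
  obtain ⟨hη1p, hη1l⟩ := hη1
  have hη0ne : η0 ≠ 0 := ne_of_gt hη0p
  have hη1ne : η1 ≠ 0 := ne_of_gt hη1p
  have hη01 : η1 - η0 ≠ 0 := sub_ne_zero_of_ne (Ne.symm hne)
  simp only [hPrep, hS001] at h1 h2 h3 h4 h5 h6 h7
  set A := S false false false with hA
  -- k = 1 consequences
  have p0 : (A - S true false false) * η0 = (A - S false true false) * η1 := by
    linear_combination h1 - h2
  have p1 : (A - S true false true) * η0 = (A - S true false false) * η0 := by
    linear_combination -h3 - p0/2
  have p2 : (A - S false true true) * η1 = (A - S false true false) * η1 := by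
    linear_combination -h4 + p0/2
  -- k = 2: p (η1 - η0) = 0
  have hP0 : (A - S true false false) * η0 * (η1 - η0) = 0 := by
    linear_combination h5 - h6 + (η1-2)*p0
  have hPz : (A - S true false false) * η0 = 0 :=
    (mul_eq_zero.mp hP0).resolve_right hη01
  have hC : S true false false = A := by
    have := (mul_eq_zero.mp hPz).resolve_right hη0ne
    linarith
  have hBz : (A - S false true false) * η1 = 0 := by linear_combination hPz - p0
  have hB : S false true false = A := by
    have := (mul_eq_zero.mp hBz).resolve_right hη1ne
    linarith
  have hC'z : (A - S true false true) * η0 = 0 := by linear_combination p1 + hPz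
  have hC' : S true false true = A := by
    have := (mul_eq_zero.mp hC'z).resolve_right hη0ne
    linarith
  have hB'z : (A - S false true true) * η1 = 0 := by linear_combination p2 + hBz
  have hB' : S false true true = A := by
    have := (mul_eq_zero.mp hB'z).resolve_right hη1ne
    linarith
  rw [hB, hC, hB', hC'] at h5 h7
  have hD'z : (S true true true - A) * (η0 * η1) = 0 := by linear_combination 2*h5
  have hD' : S true true true = A := by
    have := (mul_eq_zero.mp hD'z).resolve_right (mul_ne_zero hη0ne hη1ne)
    linarith
  have hDz : (S true true false - A) * (η0 * η1) = 0 := by linear_combination -2*h7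
  have hD : S true true false = A := by
    have := (mul_eq_zero.mp hDz).resolve_right (mul_ne_zero hη0ne hη1ne)
    linarith
  intro c0 c1 β
  cases c0 <;> cases c1 <;> cases β <;>
    first | rfl | exact hS001 | exact hB | exact hC | exact hB' | exact hC' | exact hD | exact hD'
end

section
/- With zero dark counts (d_{iβ} = 0), efficiencies η_{iβ} = η_i ∈ (0,1), computational/Hadamard bases, and the single-photon (k=1) constraint equations P_report(1|1,ρ,1) = P_report(1|0,ρ,1) for ρ ∈ {|0⟩⟨0|,|1⟩⟨1|,|+⟩⟨+|,|−⟩⟨−|} together with the k=0 constraint, any solution satisfies S_{101} = S_{100}, S_{011} = S_{010}, S_{001} = S_{000}, and (η0 - η1) S_{000} + η1 S_{010} - η0 S_{100} = 0. -/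
/-- Intermediate step of Theorem 1: from the k=0 constraint and the four k=1
constraints (states |0⟩,|1⟩,|+⟩,|−⟩, computational/Hadamard bases, zero dark
counts) any solution satisfies S101 = S100, S011 = S010, S001 = S000 and
(η0-η1) S000 + η1 S010 - η0 S100 = 0. -/
theorem stmt_17 (η0 η1 : ℝ)
    (hη0 : η0 ∈ Set.Ioo (0:ℝ) 1) (hη1 : η1 ∈ Set.Ioo (0:ℝ) 1)
    (S : Bool → Bool → Bool → ℝ)
    (hS : ∀ c0 c1 β, S c0 c1 β ∈ Set.Icc (0:ℝ) 1)
    (Prep : Bool → ℝ → ℝ)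
    (hPrep : ∀ β q, Prep β q =
        S false false β * (q*(1-η0) + (1-q)*(1-η1))
      + S false true β * ((1-q)*η1)
      + S true false β * (q*η0)
      + S true true β * 0)
    (hk0 : S false false true = S false false false)
    (h1 : Prep true (1/2) = Prep false 1)
    (h2 : Prep true (1/2) = Prep false 0)
    (h3 : Prep true 1 = Prep false (1/2))
    (h4 : Prep true 0 = Prep false (1/2)) :
    S true false true = S true false false ∧
    S false true true = S false true false ∧
    S false false true = S false false false ∧
    (η0 - η1) * S false false false
      + η1 * S false true false - η0 * S true false false = 0 := by
  rw [hPrep, hPrep] at h1 h2 h3 h4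
  obtain ⟨hη0p, hη0l⟩ := hη0
  obtain ⟨hη1p, hη1l⟩ := hη1
  have ha0 : S false false true * η0 = S false false false * η0 := by rw [hk0]
  have ha1 : S false false true * η1 = S false false false * η1 := by rw [hk0]
  have hc : η0 * (S true false true - S true false false) = 0 := by
    linarith [h1, h2, h3, h4, ha0, ha1]
  have hc' : S true false true = S true false false := by
    rcases mul_eq_zero.1 hc with h | h
    · exact absurd h (ne_of_gt hη0p)
    · linarith
  have hb : η1 * (S false true true - S false true false) = 0 := by linarith [h1, h2, h3, h4, ha0, ha1, hc']
  have hb' : S false true true = S false true false := by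
    rcases mul_eq_zero.1 hb with h | h
    · exact absurd h (ne_of_gt hη1p)
    · linarith
  exact ⟨hc', hb', hk0, by linarith [h1, h2]⟩
end

section
/- Let d_{iβ} ≤ δ for some 0 ≤ δ < 1 and i, β ∈ {0,1}, let η_min = min η_{iβ} > 0, and suppose Bob uses the reporting probabilities S_{00β} = 0, S_{01β} = η_min/η_{1β}, S_{10β} = η_min/η_{0β}, and S_{11β} ∈ [0, S_11^max]. Then for k = 0 (empty pulse) the reporting probabilities under bases 0 and 1 satisfy |P_report(1|1,ρ,0) - P_report(1|0,ρ,0)| ≤ 2δ, and for k = 1 (single photon in arbitrary qubit state ρ) they satisfy |P_report(1|1,ρ,1) - P_report(1|0,ρ,1)| ≤ 6δ + 2δ² + S_11^max(5δ + δ²). -/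
set_option maxHeartbeats 1000000

lemma P0bound (δ ηmin a b x y s : ℝ) (hδ0 : 0 ≤ δ)
    (hx0 : 0 ≤ x) (hx : x ≤ δ) (hy0 : 0 ≤ y) (hy : y ≤ δ)
    (hx1 : x ≤ 1) (hy1 : y ≤ 1)
    (h01a : 0 ≤ ηmin / b) (h01b : ηmin / b ≤ 1)
    (h10a : 0 ≤ ηmin / a) (h10b : ηmin / a ≤ 1)
    (hs0 : 0 ≤ s) (hs1 : s ≤ 1) :
    0 ≤ ηmin / b * ((1 - x) * y) + ηmin / a * ((1 - y) * x) + s * (x * y) ∧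
    ηmin / b * ((1 - x) * y) + ηmin / a * ((1 - y) * x) + s * (x * y) ≤ 2 * δ := by
  constructor
  · have h1 : 0 ≤ (1 - x) * y := mul_nonneg (by linarith) hy0
    have h2 : 0 ≤ (1 - y) * x := mul_nonneg (by linarith) hx0
    have h3 : 0 ≤ x * y := mul_nonneg hx0 hy0
    positivity
  · nlinarith [mul_le_mul_of_nonneg_right h01b (mul_nonneg (by linarith : (0:ℝ) ≤ 1 - x) hy0),
      mul_le_mul_of_nonneg_right h10b (mul_nonneg (by linarith : (0:ℝ) ≤ 1 - y) hx0),
      mul_le_mul_of_nonneg_right hs1 (mul_nonneg hx0 hy0), mul_nonneg hx0 hy0]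

lemma P1bound (δ Sm ηmin a b x y qq s s01 s10 : ℝ)
    (hδ0 : 0 ≤ δ) (hx0 : 0 ≤ x) (hx : x ≤ δ) (hy0 : 0 ≤ y) (hy : y ≤ δ)
    (hx1 : x ≤ 1) (hy1 : y ≤ 1)
    (ha0 : 0 ≤ a) (ha1 : a ≤ 1) (hb0 : 0 ≤ b) (hb1 : b ≤ 1)
    (hq0 : 0 ≤ qq) (hq1 : qq ≤ 1)
    (hs0 : 0 ≤ s) (hsS : s ≤ Sm) (hm0 : 0 ≤ ηmin) (hm1 : ηmin ≤ 1)
    (h01 : s01 * b = ηmin) (h10 : s10 * a = ηmin)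
    (h01a : 0 ≤ s01) (h01b : s01 ≤ 1) (h10a : 0 ≤ s10) (h10b : s10 ≤ 1) :
    ηmin - δ ≤
      s01 * ((1 - x) * (1 - qq * a)
          - (1 - x) * (1 - y) * (qq * (1 - a) + (1 - qq) * (1 - b)))
      + s10 * ((1 - y) * (1 - (1 - qq) * b)
          - (1 - x) * (1 - y) * (qq * (1 - a) + (1 - qq) * (1 - b)))
      + s * (1 + (1 - x) * (1 - y) * (qq * (1 - a) + (1 - qq) * (1 - b))
          - (1 - x) * (1 - qq * a) - (1 - y) * (1 - (1 - qq) * b)) ∧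
    s01 * ((1 - x) * (1 - qq * a)
          - (1 - x) * (1 - y) * (qq * (1 - a) + (1 - qq) * (1 - b)))
      + s10 * ((1 - y) * (1 - (1 - qq) * b)
          - (1 - x) * (1 - y) * (qq * (1 - a) + (1 - qq) * (1 - b)))
      + s * (1 + (1 - x) * (1 - y) * (qq * (1 - a) + (1 - qq) * (1 - b))
          - (1 - x) * (1 - qq * a) - (1 - y) * (1 - (1 - qq) * b))
      ≤ ηmin + 2 * δ + Sm * (2 * δ + δ ^ 2) := by
  obtain ⟨A, hA⟩ : ∃ A : ℝ, A = qq * (1 - a) + (1 - qq) * (1 - b) := ⟨_, rfl⟩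
  rw [← hA]
  have hA0 : 0 ≤ A := by rw [hA]; nlinarith
  have hA1 : A ≤ 1 := by rw [hA]; nlinarith
  have hT2a : 0 ≤ s01 * (1 - x) * y + s10 * (1 - y) * x := by
    have := mul_nonneg (mul_nonneg h01a (by linarith : (0:ℝ) ≤ 1 - x)) hy0
    have := mul_nonneg (mul_nonneg h10a (by linarith : (0:ℝ) ≤ 1 - y)) hx0
    linarith
  have hT2b : s01 * (1 - x) * y + s10 * (1 - y) * x ≤ 2 * δ := by
    nlinarith [mul_le_mul_of_nonneg_right h01b (mul_nonneg (by linarith : (0:ℝ) ≤ 1 - x) hy0),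
      mul_le_mul_of_nonneg_right h10b (mul_nonneg (by linarith : (0:ℝ) ≤ 1 - y) hx0)]
  have hT3a : 0 ≤ x * (1 - qq) * b + y * qq * a + x * y * A := by
    have := mul_nonneg (mul_nonneg hx0 (by linarith : (0:ℝ) ≤ 1 - qq)) hb0
    have := mul_nonneg (mul_nonneg hy0 hq0) ha0
    have := mul_nonneg (mul_nonneg hx0 hy0) hA0
    linarith
  have hT3b : x * (1 - qq) * b + y * qq * a + x * y * A ≤ 2 * δ + δ ^ 2 := by
    have c1 : (1 - qq) * b ≤ 1 := by nlinarith
    have c2 : qq * a ≤ 1 := by nlinarith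
    have e1 : x * ((1 - qq) * b) ≤ x * 1 := mul_le_mul_of_nonneg_left c1 hx0
    have e2 : y * (qq * a) ≤ y * 1 := mul_le_mul_of_nonneg_left c2 hy0
    have e3 : x * y * A ≤ x * y * 1 := mul_le_mul_of_nonneg_left hA1 (mul_nonneg hx0 hy0)
    have e4 : x * y ≤ δ * δ := mul_le_mul hx hy hy0 hδ0
    nlinarith
  have hc0 : 0 ≤ x * (1 - qq) + y * qq :=
    add_nonneg (mul_nonneg hx0 (by linarith)) (mul_nonneg hy0 hq0)
  have hc : x * (1 - qq) + y * qq ≤ δ := by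
    nlinarith [mul_le_mul_of_nonneg_right hx (by linarith : (0:ℝ) ≤ 1 - qq),
      mul_le_mul_of_nonneg_right hy hq0]
  have hrid : ηmin * ((1 - x) * (1 - qq) + (1 - y) * qq)
      = ηmin - ηmin * (x * (1 - qq) + y * qq) := by ring
  have hT1a : ηmin - δ ≤ ηmin * ((1 - x) * (1 - qq) + (1 - y) * qq) := by
    have hp : ηmin * (x * (1 - qq) + y * qq) ≤ 1 * δ := mul_le_mul hm1 hc hc0 zero_le_one
    rw [hrid]; linarith
  have hT1b : ηmin * ((1 - x) * (1 - qq) + (1 - y) * qq) ≤ ηmin := by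
    have := mul_nonneg hm0 hc0
    rw [hrid]; linarith
  have h2a : 0 ≤ A * (s01 * (1 - x) * y + s10 * (1 - y) * x) := mul_nonneg hA0 hT2a
  have h2b : A * (s01 * (1 - x) * y + s10 * (1 - y) * x) ≤ 2 * δ := by
    calc A * (s01 * (1 - x) * y + s10 * (1 - y) * x)
        ≤ 1 * (s01 * (1 - x) * y + s10 * (1 - y) * x) :=
          mul_le_mul_of_nonneg_right hA1 hT2a
      _ = s01 * (1 - x) * y + s10 * (1 - y) * x := one_mul _
      _ ≤ 2 * δ := hT2b
  have h3a : 0 ≤ s * (x * (1 - qq) * b + y * qq * a + x * y * A) := mul_nonneg hs0 hT3a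
  have h3b : s * (x * (1 - qq) * b + y * qq * a + x * y * A) ≤ Sm * (2 * δ + δ ^ 2) := by
    calc s * (x * (1 - qq) * b + y * qq * a + x * y * A)
        ≤ s * (2 * δ + δ ^ 2) := mul_le_mul_of_nonneg_left hT3b hs0
      _ ≤ Sm * (2 * δ + δ ^ 2) := by
          have : (0:ℝ) ≤ 2 * δ + δ ^ 2 := by positivity
          exact mul_le_mul_of_nonneg_right hsS this
  have hid : s01 * ((1 - x) * (1 - qq * a) - (1 - x) * (1 - y) * A)
      + s10 * ((1 - y) * (1 - (1 - qq) * b) - (1 - x) * (1 - y) * A)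
      + s * (1 + (1 - x) * (1 - y) * A - (1 - x) * (1 - qq * a)
          - (1 - y) * (1 - (1 - qq) * b))
      = ηmin * ((1 - x) * (1 - qq) + (1 - y) * qq)
        + A * (s01 * (1 - x) * y + s10 * (1 - y) * x)
        + s * (x * (1 - qq) * b + y * qq * a + x * y * A) := by
    subst hA
    linear_combination ((1 - x) * (1 - qq)) * h01 + ((1 - y) * qq) * h10
  rw [hid]
  exact ⟨by linarith, by linarith⟩


/-- Reporting strategy III (generalized symmetrization of losses): with dark
counts d_{iβ} ≤ δ < 1, efficiencies 0 < η_min ≤ η_{iβ} < 1, reporting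
probabilities S00β = 0, S01β = η_min/η_{1β}, S10β = η_min/η_{0β},
S11β ∈ [0, S11max] (S11max ≤ 1), the reporting probabilities for an empty
pulse (k = 0) or a single photon in an arbitrary qubit state (k = 1, Born
probabilities q_β ∈ [0,1]) satisfy
|P_report(1|1,ρ,0) - P_report(1|0,ρ,0)| ≤ 2δ and
|P_report(1|1,ρ,1) - P_report(1|0,ρ,1)| ≤ 6δ + 2δ² + S11max(5δ + δ²). -/
theorem stmt_18 (δ S11max ηmin : ℝ)
    (η d : Bool → Bool → ℝ) (q : Bool → ℝ)
    (S : Bool → Bool → Bool → ℝ)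
    (hδ0 : 0 ≤ δ) (hδ1 : δ < 1)
    (hd : ∀ i β, 0 ≤ d i β ∧ d i β ≤ δ)
    (hηlt : ∀ i β, η i β < 1)
    (hmin : ηmin = min (min (η false false) (η false true))
        (min (η true false) (η true true)))
    (hminpos : 0 < ηmin)
    (hq : ∀ β, 0 ≤ q β ∧ q β ≤ 1)
    (hS00 : ∀ β, S false false β = 0)
    (hS01 : ∀ β, S false true β = ηmin / η true β)
    (hS10 : ∀ β, S true false β = ηmin / η false β)
    (hS11 : ∀ β, 0 ≤ S true true β ∧ S true true β ≤ S11max)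
    (hS11max : S11max ≤ 1)
    (Prep : Bool → ℕ → ℝ)
    (hPrep0 : ∀ β, Prep β 0 =
        S false false β * ((1 - d false β) * (1 - d true β))
      + S false true β * ((1 - d false β) * d true β)
      + S true false β * ((1 - d true β) * d false β)
      + S true true β * (d false β * d true β))
    (hPrep1 : ∀ β, Prep β 1 =
        S false false β * ((1 - d false β) * (1 - d true β)
            * (q β * (1 - η false β) + (1 - q β) * (1 - η true β)))
      + S false true β * ((1 - d false β) * (1 - q β * η false β)
            - (1 - d false β) * (1 - d true β)
              * (q β * (1 - η false β) + (1 - q β) * (1 - η true β)))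
      + S true false β * ((1 - d true β) * (1 - (1 - q β) * η true β)
            - (1 - d false β) * (1 - d true β)
              * (q β * (1 - η false β) + (1 - q β) * (1 - η true β)))
      + S true true β * (1
            + (1 - d false β) * (1 - d true β)
              * (q β * (1 - η false β) + (1 - q β) * (1 - η true β))
            - (1 - d false β) * (1 - q β * η false β)
            - (1 - d true β) * (1 - (1 - q β) * η true β))) :
    |Prep true 0 - Prep false 0| ≤ 2*δ ∧
      |Prep true 1 - Prep false 1| ≤ 6*δ + 2*δ^2 + S11max*(5*δ + δ^2) := by
  have hmle : ∀ i b', ηmin ≤ η i b' := by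
    intro i b'
    rw [hmin]
    cases i <;> cases b'
    · exact le_trans (min_le_left _ _) (min_le_left _ _)
    · exact le_trans (min_le_left _ _) (min_le_right _ _)
    · exact le_trans (min_le_right _ _) (min_le_left _ _)
    · exact le_trans (min_le_right _ _) (min_le_right _ _)
  have hηpos : ∀ i b', 0 < η i b' := fun i b' => lt_of_lt_of_le hminpos (hmle i b')
  have hm1 : ηmin ≤ 1 := le_of_lt (lt_of_le_of_lt (hmle false false) (hηlt false false))
  have hSm0 : 0 ≤ S11max := le_trans (hS11 false).1 (hS11 false).2
  have h0 : ∀ β, 0 ≤ Prep β 0 ∧ Prep β 0 ≤ 2 * δ := by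
    intro β
    rw [hPrep0 β, hS00 β, hS01 β, hS10 β, zero_mul, zero_add]
    exact P0bound δ ηmin (η false β) (η true β) (d false β) (d true β) (S true true β)
      hδ0 (hd false β).1 (hd false β).2 (hd true β).1 (hd true β).2
      (le_of_lt (lt_of_le_of_lt (hd false β).2 hδ1))
      (le_of_lt (lt_of_le_of_lt (hd true β).2 hδ1))
      (div_nonneg (le_of_lt hminpos) (le_of_lt (hηpos true β)))
      ((div_le_one (hηpos true β)).mpr (hmle true β))
      (div_nonneg (le_of_lt hminpos) (le_of_lt (hηpos false β)))
      ((div_le_one (hηpos false β)).mpr (hmle false β))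
      (hS11 β).1 (le_trans (hS11 β).2 hS11max)
  have h1 : ∀ β, ηmin - δ ≤ Prep β 1 ∧
      Prep β 1 ≤ ηmin + 2 * δ + S11max * (2 * δ + δ ^ 2) := by
    intro β
    rw [hPrep1 β, hS00 β, hS01 β, hS10 β, zero_mul, zero_add]
    exact P1bound δ S11max ηmin (η false β) (η true β) (d false β) (d true β) (q β)
      (S true true β) (ηmin / η true β) (ηmin / η false β)
      hδ0 (hd false β).1 (hd false β).2 (hd true β).1 (hd true β).2
      (le_of_lt (lt_of_le_of_lt (hd false β).2 hδ1))
      (le_of_lt (lt_of_le_of_lt (hd true β).2 hδ1))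
      (le_of_lt (hηpos false β)) (le_of_lt (hηlt false β))
      (le_of_lt (hηpos true β)) (le_of_lt (hηlt true β))
      (hq β).1 (hq β).2 (hS11 β).1 (hS11 β).2 (le_of_lt hminpos) hm1
      (div_mul_cancel₀ ηmin (ne_of_gt (hηpos true β)))
      (div_mul_cancel₀ ηmin (ne_of_gt (hηpos false β)))
      (div_nonneg (le_of_lt hminpos) (le_of_lt (hηpos true β)))
      ((div_le_one (hηpos true β)).mpr (hmle true β))
      (div_nonneg (le_of_lt hminpos) (le_of_lt (hηpos false β)))
      ((div_le_one (hηpos false β)).mpr (hmle false β))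
  obtain ⟨h0ta, h0tb⟩ := h0 true
  obtain ⟨h0fa, h0fb⟩ := h0 false
  obtain ⟨h1ta, h1tb⟩ := h1 true
  obtain ⟨h1fa, h1fb⟩ := h1 false
  have hmono : S11max * (2 * δ + δ ^ 2) ≤ S11max * (5 * δ + δ ^ 2) :=
    mul_le_mul_of_nonneg_left (by linarith) hSm0
  have hSd : 0 ≤ S11max * (5 * δ + δ ^ 2) := by positivity
  have hδ2 : 0 ≤ δ ^ 2 := sq_nonneg δ
  constructor
  · rw [abs_sub_le_iff]; constructor <;> linarith
  · rw [abs_sub_le_iff]; constructor <;> linarith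
end

section
/- In the four-detector binomial routing model with efficiencies η0 = η1 ∈ (0,1), η+ = η- ∈ (0,1), and dark count probabilities d0,d1,d+,d- ∈ [0,1), suppose each of k photons goes independently to the pair (D0,D1) or (D+,D-) with probability 1/2 each, then within each pair is routed by the Born-rule probabilities of an arbitrary k-qubit state ρ. If Bob reports basis 0 when at least one of D0,D1 clicks and neither D+,D- clicks (and symmetrically for basis 1), then P_report(1,0|ρ,k) = (1-d+)(1-d-)(1-η+/2)^k - Π_i(1-d_i)·(1-(η0+η+)/2)^k and P_report(1,1|ρ,k) = (1-d0)(1-d1)(1-η0/2)^k - Π_i(1-d_i)·(1-(η0+η+)/2)^k, independently of ρ. -/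
/-! Given the number `j` of photons sent to the `(D0, D1)` arm, the no-click probability of that
arm is `(1 - d0)(1 - d1)(1 - η0)^j` whatever the split inside the arm, because `η0 = η1`; likewise
for the `(D+, D-)` arm. So the Born-rule probabilities sum out, and what is left is a binomial
average over `j`, which the binomial theorem evaluates. -/

open Finset

section BinomialRouting

variable {k : ℕ} {Q : ℕ → ℕ → ℕ → ℝ}

theorem sum_half_pow_mul_choose_mul_pow_mul_pow (k : ℕ) (x y : ℝ) :
    ∑ j ∈ range (k + 1), (1 / 2 : ℝ) ^ k * k.choose j * (x ^ j * y ^ (k - j)) =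
      ((x + y) / 2) ^ k := by
  rw [div_eq_mul_inv (x + y), mul_pow, add_pow, sum_mul]
  exact sum_congr rfl fun j _ => by ring

theorem sum_mul_conditional_eq_of_eq (hQsum : ∀ j ∈ range (k + 1),
      ∑ k0 ∈ range (j + 1), ∑ kp ∈ range (k - j + 1), Q j k0 kp = 1)
    (w : ℕ → ℝ) {f : ℕ → ℕ → ℕ → ℝ} {g : ℕ → ℝ}
    (hfg : ∀ j ∈ range (k + 1), ∀ k0 ∈ range (j + 1), ∀ kp ∈ range (k - j + 1),
      f j k0 kp = g j) :
    ∑ j ∈ range (k + 1), ∑ k0 ∈ range (j + 1), ∑ kp ∈ range (k - j + 1),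
        (w j * Q j k0 kp) * f j k0 kp = ∑ j ∈ range (k + 1), w j * g j := by
  refine sum_congr rfl fun j hj => ?_
  calc ∑ k0 ∈ range (j + 1), ∑ kp ∈ range (k - j + 1), (w j * Q j k0 kp) * f j k0 kp
      = ∑ k0 ∈ range (j + 1), ∑ kp ∈ range (k - j + 1), w j * g j * Q j k0 kp :=
        sum_congr rfl fun k0 hk0 => sum_congr rfl fun kp hkp => by
          rw [hfg j hj k0 hk0 kp hkp]; ring
    _ = w j * g j := by simp_rw [← mul_sum, hQsum j hj, mul_one]

theorem mul_pow_mul_mul_pow_sub {n m : ℕ} (hm : m ∈ range (n + 1)) (c c' u : ℝ) :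
    (c * u ^ m) * (c' * u ^ (n - m)) = c * c' * u ^ n := by
  rw [← pow_mul_pow_sub u (mem_range_succ_iff.mp hm)]; ring

variable (hQsum : ∀ j ∈ range (k + 1),
  ∑ k0 ∈ range (j + 1), ∑ kp ∈ range (k - j + 1), Q j k0 kp = 1)
include hQsum

theorem sum_click_first_arm_silent_second (u v c0 c1 cp cm : ℝ) :
    ∑ j ∈ range (k + 1), ∑ k0 ∈ range (j + 1), ∑ kp ∈ range (k - j + 1),
      ((1 / 2 : ℝ) ^ k * k.choose j * Q j k0 kp) *
        ((1 - (c0 * u ^ k0) * (c1 * u ^ (j - k0))) * ((cp * v ^ kp) * (cm * v ^ (k - j - kp))))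
      = cp * cm * ((1 + v) / 2) ^ k - c0 * c1 * cp * cm * ((u + v) / 2) ^ k := by
  calc _ = ∑ j ∈ range (k + 1), (1 / 2 : ℝ) ^ k * k.choose j *
          ((1 - c0 * c1 * u ^ j) * (cp * cm * v ^ (k - j))) :=
        sum_mul_conditional_eq_of_eq hQsum _ fun j _ k0 hk0 kp hkp => by
          rw [mul_pow_mul_mul_pow_sub hk0, mul_pow_mul_mul_pow_sub hkp]
    _ = cp * cm * ∑ j ∈ range (k + 1), (1 / 2 : ℝ) ^ k * k.choose j * (1 ^ j * v ^ (k - j))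
          - c0 * c1 * cp * cm *
            ∑ j ∈ range (k + 1), (1 / 2 : ℝ) ^ k * k.choose j * (u ^ j * v ^ (k - j)) := by
        rw [mul_sum, mul_sum, ← sum_sub_distrib]
        exact sum_congr rfl fun j _ => by ring
    _ = _ := by simp only [sum_half_pow_mul_choose_mul_pow_mul_pow]

theorem sum_silent_first_arm_click_second (u v c0 c1 cp cm : ℝ) :
    ∑ j ∈ range (k + 1), ∑ k0 ∈ range (j + 1), ∑ kp ∈ range (k - j + 1),
      ((1 / 2 : ℝ) ^ k * k.choose j * Q j k0 kp) *
        ((1 - (cp * v ^ kp) * (cm * v ^ (k - j - kp))) * ((c0 * u ^ k0) * (c1 * u ^ (j - k0))))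
      = c0 * c1 * ((u + 1) / 2) ^ k - c0 * c1 * cp * cm * ((u + v) / 2) ^ k := by
  calc _ = ∑ j ∈ range (k + 1), (1 / 2 : ℝ) ^ k * k.choose j *
          ((1 - cp * cm * v ^ (k - j)) * (c0 * c1 * u ^ j)) :=
        sum_mul_conditional_eq_of_eq hQsum _ fun j _ k0 hk0 kp hkp => by
          rw [mul_pow_mul_mul_pow_sub hk0, mul_pow_mul_mul_pow_sub hkp]
    _ = c0 * c1 * ∑ j ∈ range (k + 1), (1 / 2 : ℝ) ^ k * k.choose j * (u ^ j * 1 ^ (k - j))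
          - c0 * c1 * cp * cm *
            ∑ j ∈ range (k + 1), (1 / 2 : ℝ) ^ k * k.choose j * (u ^ j * v ^ (k - j)) := by
        rw [mul_sum, mul_sum, ← sum_sub_distrib]
        exact sum_congr rfl fun j _ => by ring
    _ = _ := by simp only [sum_half_pow_mul_choose_mul_pow_mul_pow]

end BinomialRouting

theorem stmt_19_general (k : ℕ) (ηA ηB d0 d1 dp dm : ℝ)
    (Q : ℕ → ℕ → ℕ → ℝ)
    (hQsum : ∀ k01 ∈ Finset.range (k+1),
      ∑ k0 ∈ Finset.range (k01+1), ∑ kp ∈ Finset.range (k-k01+1),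
        Q k01 k0 kp = 1) :
    (∑ k01 ∈ Finset.range (k+1), ∑ k0 ∈ Finset.range (k01+1),
        ∑ kp ∈ Finset.range (k-k01+1),
        ((1/2:ℝ)^k * (k.choose k01 : ℝ) * Q k01 k0 kp) *
          ((1 - ((1-d0)*(1-ηA)^k0) * ((1-d1)*(1-ηA)^(k01-k0))) *
            (((1-dp)*(1-ηB)^kp) * ((1-dm)*(1-ηB)^(k-k01-kp))))
      = (1-dp)*(1-dm)*(1-ηB/2)^k
        - (1-d0)*(1-d1)*(1-dp)*(1-dm)*(1-(ηA+ηB)/2)^k)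
    ∧
    (∑ k01 ∈ Finset.range (k+1), ∑ k0 ∈ Finset.range (k01+1),
        ∑ kp ∈ Finset.range (k-k01+1),
        ((1/2:ℝ)^k * (k.choose k01 : ℝ) * Q k01 k0 kp) *
          ((1 - ((1-dp)*(1-ηB)^kp) * ((1-dm)*(1-ηB)^(k-k01-kp))) *
            (((1-d0)*(1-ηA)^k0) * ((1-d1)*(1-ηA)^(k01-k0))))
      = (1-d0)*(1-d1)*(1-ηA/2)^k
        - (1-d0)*(1-d1)*(1-dp)*(1-dm)*(1-(ηA+ηB)/2)^k) := by
  constructor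
  · rw [sum_click_first_arm_silent_second hQsum]; ring
  · rw [sum_silent_first_arm_click_second hQsum]; ring

/-- Four-detector setup II with η0 = η1 = ηA, η+ = η- = ηB: for any Born-rule
conditional distribution Q(k0,k+|k01), the probabilities that Bob reports a
measurement in basis 0 (resp. basis 1) are
(1-d+)(1-d-)(1-ηB/2)^k - ∏(1-dᵢ)(1-(ηA+ηB)/2)^k and
(1-d0)(1-d1)(1-ηA/2)^k - ∏(1-dᵢ)(1-(ηA+ηB)/2)^k, independently of ρ. -/
theorem stmt_19 (k : ℕ) (ηA ηB d0 d1 dp dm : ℝ)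
    (hA : ηA ∈ Set.Ioo (0:ℝ) 1) (hB : ηB ∈ Set.Ioo (0:ℝ) 1)
    (hd0 : d0 ∈ Set.Ico (0:ℝ) 1) (hd1 : d1 ∈ Set.Ico (0:ℝ) 1)
    (hdp : dp ∈ Set.Ico (0:ℝ) 1) (hdm : dm ∈ Set.Ico (0:ℝ) 1)
    (Q : ℕ → ℕ → ℕ → ℝ)
    (hQnn : ∀ k01 k0 kp, 0 ≤ Q k01 k0 kp)
    (hQsum : ∀ k01 ∈ Finset.range (k+1),
      ∑ k0 ∈ Finset.range (k01+1), ∑ kp ∈ Finset.range (k-k01+1),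
        Q k01 k0 kp = 1) :
    (∑ k01 ∈ Finset.range (k+1), ∑ k0 ∈ Finset.range (k01+1),
        ∑ kp ∈ Finset.range (k-k01+1),
        ((1/2:ℝ)^k * (k.choose k01 : ℝ) * Q k01 k0 kp) *
          ((1 - ((1-d0)*(1-ηA)^k0) * ((1-d1)*(1-ηA)^(k01-k0))) *
            (((1-dp)*(1-ηB)^kp) * ((1-dm)*(1-ηB)^(k-k01-kp))))
      = (1-dp)*(1-dm)*(1-ηB/2)^k
        - (1-d0)*(1-d1)*(1-dp)*(1-dm)*(1-(ηA+ηB)/2)^k)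
    ∧
    (∑ k01 ∈ Finset.range (k+1), ∑ k0 ∈ Finset.range (k01+1),
        ∑ kp ∈ Finset.range (k-k01+1),
        ((1/2:ℝ)^k * (k.choose k01 : ℝ) * Q k01 k0 kp) *
          ((1 - ((1-dp)*(1-ηB)^kp) * ((1-dm)*(1-ηB)^(k-k01-kp))) *
            (((1-d0)*(1-ηA)^k0) * ((1-d1)*(1-ηA)^(k01-k0))))
      = (1-d0)*(1-d1)*(1-ηA/2)^k
        - (1-d0)*(1-d1)*(1-dp)*(1-dm)*(1-(ηA+ηB)/2)^k) :=
  stmt_19_general k ηA ηB d0 d1 dp dm Q hQsum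
end
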